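/- Let k ∈ C(S¹) with ρ := ∫₀¹ k(s)² ds > 0, and let σ ∈ C²(S¹) be the unique periodic solution of ∂_{ss}σ − k²σ = −1. Then e^{−ρ/2}/ρ ≤ σ(s) ≤ 1 + 1/ρ for all s ∈ S¹. -/

import Mathlib

/-!
At a minimum point `s₀` of `σ` the equation gives `k²σ = σ'' + 1 ≥ 1`, so `σ > 0`, and integrating
the equation over a period gives `∫ k²σ = 1`, whence `ρ · min σ ≤ 1`. The function `σ'` and the
logarithmic derivative `φ = σ'/σ`, which solves the Riccati equation `φ' = k² - 1/σ - φ²`, both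
vanish at `s₀`, are periodic, and have derivatives bounded above by `k²σ` and `k²` respectively;
integrating from `s₀` forwards and from `s₀ + 1` backwards gives `|σ'| ≤ ∫ k²σ = 1` and
`|φ| ≤ ∫ k² = ρ`. Integrating the Riccati equation over a period gives `∫ 1/σ ≤ ρ`, so
`ρ · max σ ≥ 1`. Finally a maximum point lies within distance `1/2` of `s₀`, so
`max σ ≤ min σ + 1/2` and `log max σ ≤ log min σ + ρ/2`.
-/

open Real MeasureTheory intervalIntegral Set Filter Topology

theorem IsLocalMin.deriv_deriv_nonneg {f : ℝ → ℝ} {x : ℝ} (h : IsLocalMin f x)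
    (hc : ContinuousAt f x) : 0 ≤ deriv (deriv f) x := by
  by_contra! hneg
  -- the second derivative test makes `x` also a local maximum, so `f` is locally constant
  have hmax := isLocalMax_of_deriv_deriv_neg hneg h.deriv_eq_zero hc
  have hconst : f =ᶠ[𝓝 x] fun _ => f x := (h.and hmax).mono fun y hy => le_antisymm hy.2 hy.1
  have : deriv (deriv f) x = 0 := by simp [hconst.deriv.deriv_eq]
  linarith

theorem sub_le_mul_abs_sub_of_hasDerivAt {f f' : ℝ → ℝ} {C : ℝ}
    (hf : ∀ x, HasDerivAt f (f' x) x) (bound : ∀ x, |f' x| ≤ C) (x y : ℝ) :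
    f y - f x ≤ C * |y - x| :=
  (le_abs_self _).trans <| convex_univ.norm_image_sub_le_of_norm_hasDerivWithin_le
    (fun x _ => (hf x).hasDerivWithinAt) (fun x _ => bound x) (mem_univ x) (mem_univ y)

namespace Function.Periodic

variable {f g g' w : ℝ → ℝ} {c : ℝ}

theorem forall_of_forall_mem_Icc {p : ℝ → Prop} (hf : Periodic f c) (hc : 0 < c) (a : ℝ)
    (h : ∀ x ∈ Icc a (a + c), p (f x)) (x : ℝ) : p (f x) := by
  obtain ⟨y, hy, hyx⟩ : f x ∈ f '' Icc a (a + c) := hf.image_Icc hc a ▸ mem_range_self x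
  exact hyx ▸ h y hy

theorem exists_mem_Icc_forall_le (hf : Periodic f c) (hc : 0 < c) (hcont : Continuous f)
    (a : ℝ) : ∃ x ∈ Icc a (a + c), ∀ y, f x ≤ f y := by
  obtain ⟨x, hx, hmin⟩ := (isCompact_Icc (a := a) (b := a + c)).exists_isMinOn
    (nonempty_Icc.2 (by linarith)) hcont.continuousOn
  exact ⟨x, hx, hf.forall_of_forall_mem_Icc (p := (f x ≤ ·)) hc a hmin⟩

theorem exists_mem_Icc_forall_ge (hf : Periodic f c) (hc : 0 < c) (hcont : Continuous f)
    (a : ℝ) : ∃ x ∈ Icc a (a + c), ∀ y, f y ≤ f x := by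
  obtain ⟨x, hx, hmax⟩ := (isCompact_Icc (a := a) (b := a + c)).exists_isMaxOn
    (nonempty_Icc.2 (by linarith)) hcont.continuousOn
  exact ⟨x, hx, hf.forall_of_forall_mem_Icc (p := (· ≤ f x)) hc a hmax⟩

theorem integral_eq_zero_of_hasDerivAt (hg : Periodic g c) (hderiv : ∀ x, HasDerivAt g (g' x) x)
    (a : ℝ) (hint : IntervalIntegrable g' volume a (a + c)) : ∫ x in a..a + c, g' x = 0 := by
  rw [integral_eq_sub_of_hasDerivAt (fun x _ => hderiv x) hint, hg a, sub_self]

theorem abs_le_of_hasDerivAt_le (hg : Periodic g c) (hc : 0 < c) {a C : ℝ} (ha : g a = 0)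
    (hderiv : ∀ x, HasDerivAt g (g' x) x) (hg' : Continuous g') (hw : Continuous w)
    (hw₀ : ∀ x, 0 ≤ w x) (hle : ∀ x, g' x ≤ w x) (hC : ∫ x in a..a + c, w x ≤ C) (x : ℝ) :
    |g x| ≤ C := by
  have hgw : ∀ u v, u ≤ v → g v - g u ≤ ∫ x in u..v, w x := fun u v huv => by
    rw [← integral_eq_sub_of_hasDerivAt (fun x _ => hderiv x) (hg'.intervalIntegrable u v)]
    exact integral_mono_on huv (hg'.intervalIntegrable u v) (hw.intervalIntegrable u v)
      fun x _ => hle x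
  have hwC : ∀ u v, a ≤ u → u ≤ v → v ≤ a + c → ∫ x in u..v, w x ≤ C := fun u v hau huv hvb =>
    (integral_mono_interval hau huv hvb (Eventually.of_forall hw₀)
      (hw.intervalIntegrable _ _)).trans hC
  refine hg.forall_of_forall_mem_Icc (p := (|·| ≤ C)) hc a (fun t ht => abs_le.2 ⟨?_, ?_⟩) x
  · have := hgw t (a + c) ht.2
    have := hwC t (a + c) ht.1 ht.2 le_rfl
    rw [hg a, ha] at *
    linarith
  · have := hgw a t ht.1
    have := hwC a t le_rfl ht.1 ht.2
    linarith

end Function.Periodic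

structure IsPeriodicSchrodingerSolution (k σ : ℝ → ℝ) : Prop where
  continuous_potential : Continuous k
  contDiff : ContDiff ℝ 2 σ
  periodic : Function.Periodic σ 1
  deriv_deriv_eq : ∀ s, deriv (deriv σ) s = k s ^ 2 * σ s - 1

namespace IsPeriodicSchrodingerSolution

variable {k σ : ℝ → ℝ}

theorem continuous (h : IsPeriodicSchrodingerSolution k σ) : Continuous σ :=
  h.contDiff.continuous

theorem hasDerivAt (h : IsPeriodicSchrodingerSolution k σ) (s : ℝ) :
    HasDerivAt σ (deriv σ s) s :=
  ((h.contDiff.differentiable two_ne_zero) s).hasDerivAt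

theorem contDiff_deriv (h : IsPeriodicSchrodingerSolution k σ) : ContDiff ℝ 1 (deriv σ) :=
  (contDiff_succ_iff_deriv.mp (by exact_mod_cast h.contDiff : ContDiff ℝ (1 + 1) σ)).2.2

theorem hasDerivAt_deriv (h : IsPeriodicSchrodingerSolution k σ) (s : ℝ) :
    HasDerivAt (deriv σ) (k s ^ 2 * σ s - 1) s :=
  h.deriv_deriv_eq s ▸ ((h.contDiff_deriv.differentiable one_ne_zero) s).hasDerivAt

theorem continuous_sq_mul (h : IsPeriodicSchrodingerSolution k σ) :
    Continuous fun s => k s ^ 2 * σ s :=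
  (h.continuous_potential.pow 2).mul h.continuous

theorem periodic_deriv (h : IsPeriodicSchrodingerSolution k σ) : Function.Periodic (deriv σ) 1 :=
  fun s => by rw [← deriv_comp_add_const, funext h.periodic]

theorem pos (h : IsPeriodicSchrodingerSolution k σ) (s : ℝ) : 0 < σ s := by
  obtain ⟨s₀, -, hs₀⟩ := h.periodic.exists_mem_Icc_forall_le one_pos h.continuous 0
  have hσ'' := IsLocalMin.deriv_deriv_nonneg (Eventually.of_forall hs₀) h.continuous.continuousAt
  rw [h.deriv_deriv_eq] at hσ''
  have : 0 < σ s₀ := by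
    by_contra! hle
    nlinarith [sq_nonneg (k s₀)]
  exact this.trans_le (hs₀ s)

theorem integral_sq_mul_eq_one (h : IsPeriodicSchrodingerSolution k σ) (a : ℝ) :
    ∫ s in a..a + 1, k s ^ 2 * σ s = 1 := by
  have := h.periodic_deriv.integral_eq_zero_of_hasDerivAt h.hasDerivAt_deriv a
    ((h.continuous_sq_mul.sub continuous_const).intervalIntegrable _ _)
  rw [integral_sub (h.continuous_sq_mul.intervalIntegrable _ _) intervalIntegrable_const] at this
  simpa [sub_eq_zero] using this

theorem mul_integral_sq_le_one (h : IsPeriodicSchrodingerSolution k σ) {s₀ : ℝ}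
    (hs₀ : ∀ s, σ s₀ ≤ σ s) : σ s₀ * ∫ s in (0:ℝ)..1, k s ^ 2 ≤ 1 := by
  calc σ s₀ * ∫ s in (0:ℝ)..1, k s ^ 2 = ∫ s in (0:ℝ)..1, k s ^ 2 * σ s₀ := by
        rw [intervalIntegral.integral_mul_const, mul_comm]
    _ ≤ ∫ s in (0:ℝ)..1, k s ^ 2 * σ s :=
        integral_mono_on zero_le_one
          (((h.continuous_potential.pow 2).mul continuous_const).intervalIntegrable _ _)
          (h.continuous_sq_mul.intervalIntegrable _ _)
          fun s _ => mul_le_mul_of_nonneg_left (hs₀ s) (sq_nonneg _)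
    _ = 1 := by simpa using h.integral_sq_mul_eq_one 0

theorem abs_deriv_le_one (h : IsPeriodicSchrodingerSolution k σ) (s : ℝ) : |deriv σ s| ≤ 1 := by
  obtain ⟨s₀, -, hs₀⟩ := h.periodic.exists_mem_Icc_forall_le one_pos h.continuous 0
  exact h.periodic_deriv.abs_le_of_hasDerivAt_le one_pos
    (IsLocalMin.deriv_eq_zero (Eventually.of_forall hs₀)) h.hasDerivAt_deriv
    (h.continuous_sq_mul.sub continuous_const) h.continuous_sq_mul
    (fun t => mul_nonneg (sq_nonneg _) (h.pos t).le) (fun t => by linarith)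
    (h.integral_sq_mul_eq_one s₀).le s

theorem continuous_inv (h : IsPeriodicSchrodingerSolution k σ) : Continuous fun s => (σ s)⁻¹ :=
  h.continuous.inv₀ fun s => (h.pos s).ne'

theorem periodic_logDeriv (h : IsPeriodicSchrodingerSolution k σ) :
    Function.Periodic (logDeriv σ) 1 :=
  fun s => by simp only [logDeriv_apply, h.periodic_deriv s, h.periodic s]

theorem continuous_logDeriv (h : IsPeriodicSchrodingerSolution k σ) : Continuous (logDeriv σ) :=
  h.contDiff_deriv.continuous.div h.continuous fun s => (h.pos s).ne'

theorem hasDerivAt_logDeriv (h : IsPeriodicSchrodingerSolution k σ) (s : ℝ) :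
    HasDerivAt (logDeriv σ) (k s ^ 2 - (σ s)⁻¹ - logDeriv σ s ^ 2) s := by
  have hσ := (h.pos s).ne'
  refine ((h.hasDerivAt_deriv s).div (h.hasDerivAt s) hσ).congr_deriv ?_
  rw [logDeriv_apply]
  field_simp

theorem integral_inv_le_integral_sq (h : IsPeriodicSchrodingerSolution k σ) :
    ∫ s in (0:ℝ)..1, (σ s)⁻¹ ≤ ∫ s in (0:ℝ)..1, k s ^ 2 := by
  have hinv := h.continuous_inv
  have hsq : Continuous fun s => k s ^ 2 := h.continuous_potential.pow 2
  have hzero := h.periodic_logDeriv.integral_eq_zero_of_hasDerivAt h.hasDerivAt_logDeriv 0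
    (((hsq.sub hinv).sub (h.continuous_logDeriv.pow 2)).intervalIntegrable _ _)
  rw [zero_add, integral_sub (f := fun s => k s ^ 2 - (σ s)⁻¹) (g := fun s => logDeriv σ s ^ 2)
      ((hsq.sub hinv).intervalIntegrable _ _) ((h.continuous_logDeriv.pow 2).intervalIntegrable _ _),
    integral_sub (hsq.intervalIntegrable _ _) (hinv.intervalIntegrable _ _)] at hzero
  have : 0 ≤ ∫ s in (0:ℝ)..1, logDeriv σ s ^ 2 :=
    integral_nonneg zero_le_one fun s _ => sq_nonneg _
  linarith

theorem one_le_mul_integral_sq (h : IsPeriodicSchrodingerSolution k σ) {s₁ : ℝ}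
    (hs₁ : ∀ s, σ s ≤ σ s₁) : 1 ≤ σ s₁ * ∫ s in (0:ℝ)..1, k s ^ 2 := by
  have hinv : (σ s₁)⁻¹ ≤ ∫ s in (0:ℝ)..1, (σ s)⁻¹ :=
    calc (σ s₁)⁻¹ = ∫ _ in (0:ℝ)..1, (σ s₁)⁻¹ := by simp
      _ ≤ ∫ s in (0:ℝ)..1, (σ s)⁻¹ :=
        integral_mono_on zero_le_one intervalIntegrable_const
          (h.continuous_inv.intervalIntegrable _ _)
          fun s _ => inv_anti₀ (h.pos s) (hs₁ s)
  rw [← inv_mul_le_iff₀ (h.pos s₁), mul_one]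
  exact hinv.trans h.integral_inv_le_integral_sq

theorem abs_logDeriv_le (h : IsPeriodicSchrodingerSolution k σ) (hk : Function.Periodic k 1)
    (s : ℝ) : |logDeriv σ s| ≤ ∫ t in (0:ℝ)..1, k t ^ 2 := by
  obtain ⟨s₀, -, hs₀⟩ := h.periodic.exists_mem_Icc_forall_le one_pos h.continuous 0
  have hsq : Function.Periodic (fun t => k t ^ 2) 1 := fun t => by simp only [hk t]
  refine h.periodic_logDeriv.abs_le_of_hasDerivAt_le one_pos ?_ h.hasDerivAt_logDeriv
    (w := fun t => k t ^ 2)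
    (((h.continuous_potential.pow 2).sub h.continuous_inv).sub (h.continuous_logDeriv.pow 2)) (h.continuous_potential.pow 2) (fun t => sq_nonneg _)
    (fun t => by linarith [inv_pos.2 (h.pos t), sq_nonneg (logDeriv σ t)])
    (by rw [hsq.intervalIntegral_add_eq s₀ 0, zero_add]) s
  rw [logDeriv_apply, IsLocalMin.deriv_eq_zero (Eventually.of_forall hs₀), zero_div]

theorem sub_le_abs_sub (h : IsPeriodicSchrodingerSolution k σ) (x y : ℝ) :
    σ y - σ x ≤ |y - x| := by
  simpa using sub_le_mul_abs_sub_of_hasDerivAt h.hasDerivAt h.abs_deriv_le_one x y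

theorem log_sub_log_le (h : IsPeriodicSchrodingerSolution k σ) (hk : Function.Periodic k 1)
    (x y : ℝ) : log (σ y) - log (σ x) ≤ (∫ t in (0:ℝ)..1, k t ^ 2) * |y - x| :=
  sub_le_mul_abs_sub_of_hasDerivAt (f' := logDeriv σ)
    (fun t => (h.hasDerivAt t).log (h.pos t).ne') (h.abs_logDeriv_le hk) x y

end IsPeriodicSchrodingerSolution

theorem stmt12 (k σ : ℝ → ℝ) (ρ : ℝ)
    (hk : Continuous k) (hperk : Function.Periodic k 1)
    (hσ : ContDiff ℝ 2 σ) (hperσ : Function.Periodic σ 1)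
    (hρ : ρ = ∫ s in (0:ℝ)..1, k s ^ 2) (hρpos : 0 < ρ)
    (hode : ∀ s, deriv (deriv σ) s - k s ^ 2 * σ s = -1) :
    ∀ s, Real.exp (-ρ / 2) / ρ ≤ σ s ∧ σ s ≤ 1 + 1 / ρ := by
  have h : IsPeriodicSchrodingerSolution k σ := ⟨hk, hσ, hperσ, fun s => by linarith [hode s]⟩
  obtain ⟨s₀, -, hs₀⟩ := hperσ.exists_mem_Icc_forall_le one_pos h.continuous 0
  obtain ⟨s₁, hs₁_mem, hs₁⟩ := hperσ.exists_mem_Icc_forall_ge one_pos h.continuous (s₀ - 1 / 2)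
  have hdist : |s₁ - s₀| ≤ 1 / 2 := abs_le.2 ⟨by linarith [hs₁_mem.1], by linarith [hs₁_mem.2]⟩
  have hmin_le : σ s₀ * ρ ≤ 1 := hρ ▸ h.mul_integral_sq_le_one hs₀
  have hmax_ge : 1 ≤ σ s₁ * ρ := hρ ▸ h.one_le_mul_integral_sq hs₁
  have hosc : σ s₁ - σ s₀ ≤ 1 / 2 := (h.sub_le_abs_sub s₀ s₁).trans hdist
  have hlog : log (σ s₁) - log (σ s₀) ≤ ρ / 2 :=
    calc log (σ s₁) - log (σ s₀) ≤ ρ * |s₁ - s₀| := hρ ▸ h.log_sub_log_le hperk s₀ s₁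
      _ ≤ ρ / 2 := by nlinarith
  intro s
  constructor
  · calc exp (-ρ / 2) / ρ ≤ σ s₁ * exp (-ρ / 2) := by
          rw [div_le_iff₀ hρpos]; nlinarith [exp_pos (-ρ / 2)]
      _ = exp (log (σ s₁) - ρ / 2) := by rw [exp_sub, exp_log (h.pos s₁), neg_div, exp_neg, div_eq_mul_inv (σ s₁)]
      _ ≤ exp (log (σ s₀)) := exp_le_exp.2 (by linarith)
      _ = σ s₀ := exp_log (h.pos s₀)
      _ ≤ σ s := hs₀ s
  · have : σ s₀ ≤ 1 / ρ := by rw [le_div_iff₀ hρpos]; exact hmin_le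
    linarith [hs₁ s]
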